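/- Let f ∈ [0, 1] and let ρ_w be the two-qubit Werner state, i.e., the Bell-diagonal state ρ_γ with γ = ((1−f)/3, (1−f)/3, (1−f)/3, f). Then the Bures discord of response of ρ_w, namely the infimum over all traceless 2 × 2 unitary matrices U of 1 − √F(ρ_w, (U ⊗ₖ I_2) ρ_w (U ⊗ₖ I_2)ᴴ), equals 1 − (2/3)(1 − f) − (2/√3)·√(f(1 − f)). -/

import Mathlib

open Matrix Kronecker
open scoped ComplexOrder

open scoped Classical MatrixOrder in
/-- The positive semidefinite square root of a matrix (junk value `0` if not PSD). -/
noncomputable def msqrt {n : Type*} [Fintype n] [DecidableEq n] (A : Matrix n n ℂ) : Matrix n n ℂ :=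
  if h : A.PosSemidef then CFC.sqrt A else 0

/-- Square-root fidelity `tr √(√ρ · σ · √ρ)` (as a real number). -/
noncomputable def sqrtFid {n : Type*} [Fintype n] [DecidableEq n] (ρ σ : Matrix n n ℂ) : ℝ :=
  ((msqrt (msqrt ρ * σ * msqrt ρ)).trace).re

/-- Trace norm `tr √(Xᴴ X)` (as a real number). -/
noncomputable def traceNorm {n : Type*} [Fintype n] [DecidableEq n] (X : Matrix n n ℂ) : ℝ :=
  ((msqrt (Xᴴ * X)).trace).re

/-- The Bell-diagonal two-qubit state with Bell-basis eigenvalues `γ₁, γ₂, γ₃, γ₄`. -/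
noncomputable def bellDiag (γ₁ γ₂ γ₃ γ₄ : ℝ) :
    Matrix (Fin 2 × Fin 2) (Fin 2 × Fin 2) ℂ :=
  Matrix.reindex finProdFinEquiv.symm finProdFinEquiv.symm
    ((1 / 2 : ℂ) • !![(γ₁ : ℂ) + γ₂, 0, 0, (γ₁ : ℂ) - γ₂;
        0, (γ₃ : ℂ) + γ₄, (γ₃ : ℂ) - γ₄, 0;
        0, (γ₃ : ℂ) - γ₄, (γ₃ : ℂ) + γ₄, 0;
        (γ₁ : ℂ) - γ₂, 0, 0, (γ₁ : ℂ) + γ₂])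


/-!
The Werner state is `ρ = a • (1 - P) + f • P` with `a = (1 - f) / 3` and `P` the projection onto
the singlet `ψ⁻`. For a traceless unitary `U` one has `⟨ψ⁻, (U ⊗ 1) ψ⁻⟩ = tr U / 2 = 0`, so the
rotated state is `σ = a • (1 - P') + f • P'` with `P' ⟂ P`. Everything then lives in the
commutative algebra spanned by `1, P, P'`, where `√(√ρ σ √ρ) = a • (1 - P - P') + √(a f) • (P + P')`
has trace `2 a + 2 √(a f)`, independently of `U`: the infimum is taken over a constant.
-/

open scoped MatrixOrder

lemma IsStarProjection.conj_unitary {R : Type*} [Monoid R] [StarMul R] {p u : R}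
    (hp : IsStarProjection p) (hu : u ∈ unitary R) : IsStarProjection (u * p * star u) where
  isSelfAdjoint := hp.isSelfAdjoint.conjugate u
  isIdempotentElem := calc
    u * p * star u * (u * p * star u) = u * p * (star u * u) * p * star u := by
      simp only [mul_assoc]
    _ = u * p * star u := by
      rw [Unitary.star_mul_self_of_mem hu, mul_one, mul_assoc u p p, hp.isIdempotentElem.eq]

section ProjCombo

variable {n : Type*} [Fintype n] [DecidableEq n]

lemma msqrt_mul_self {S : Matrix n n ℂ} (hS : 0 ≤ S) : msqrt (S * S) = S := by
  have hSS : (S * S).PosSemidef := by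
    simpa [(nonneg_iff_posSemidef.mp hS).isHermitian.eq] using
      posSemidef_conjTranspose_mul_self S
  rw [msqrt, dif_pos hSS]
  exact CFC.sqrt_unique rfl hS

noncomputable def projCombo (P : Matrix n n ℂ) (x y : ℝ) : Matrix n n ℂ :=
  x • (1 - P) + y • P

variable {P Q : Matrix n n ℂ}

lemma projCombo_nonneg (hP : IsStarProjection P) {x y : ℝ} (hx : 0 ≤ x) (hy : 0 ≤ y) :
    0 ≤ projCombo P x y :=
  add_nonneg (smul_nonneg hx hP.one_sub_nonneg) (smul_nonneg hy hP.nonneg)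

lemma projCombo_mul_projCombo (hP : IsStarProjection P) (x y x' y' : ℝ) :
    projCombo P x y * projCombo P x' y' = projCombo P (x * x') (y * y') := by
  simp only [projCombo, add_mul, mul_add, smul_mul_smul_comm, hP.mul_one_sub_self,
    hP.one_sub_mul_self, hP.one_sub.isIdempotentElem.eq, hP.isIdempotentElem.eq, smul_zero,
    add_zero, zero_add, mul_smul]

lemma trace_projCombo (x y : ℝ) :
    (projCombo P x y).trace = x * (Fintype.card n - P.trace) + y * P.trace := by
  simp [projCombo, Matrix.trace_sub, Complex.real_smul]

lemma projCombo_conj_unitary {K : Matrix n n ℂ} (hK : K ∈ unitary (Matrix n n ℂ)) (x y : ℝ) :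
    K * projCombo P x y * star K = projCombo (K * P * star K) x y := by
  simp only [projCombo, mul_add, add_mul, mul_sub, sub_mul, mul_smul_comm, smul_mul_assoc,
    mul_one, Unitary.mul_star_self_of_mem hK]

lemma projCombo_sandwich_of_mul_eq_zero (hP : IsStarProjection P) (hQ : IsStarProjection Q)
    (hPQ : P * Q = 0) (s t : ℝ) :
    projCombo P s t * projCombo Q (s * s) (t * t) * projCombo P s t =
      projCombo (P + Q) (s * s * (s * s)) (s * t * (s * t)) := by
  have hQP : Q * P = 0 := by
    simpa [hP.isSelfAdjoint.star_eq, hQ.isSelfAdjoint.star_eq] using congr(star $(hPQ))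
  simp only [projCombo, add_mul, mul_add, sub_mul, mul_sub, smul_mul_assoc, mul_smul_comm,
    one_mul, mul_one, hP.isIdempotentElem.eq, hPQ, hQP, smul_zero, sub_zero, zero_mul]
  module

lemma sqrtFid_projCombo_of_mul_eq_zero (hP : IsStarProjection P) (hQ : IsStarProjection Q)
    (hPQ : P * Q = 0) (hPtr : P.trace = 1) (hQtr : Q.trace = 1) {a b : ℝ} (ha : 0 ≤ a)
    (hb : 0 ≤ b) :
    sqrtFid (projCombo P a b) (projCombo Q a b) = a * (Fintype.card n - 2) + 2 * √(a * b) := by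
  obtain ⟨s, hs, rfl⟩ : ∃ s, 0 ≤ s ∧ s * s = a := ⟨√a, Real.sqrt_nonneg a, Real.mul_self_sqrt ha⟩
  obtain ⟨t, ht, rfl⟩ : ∃ t, 0 ≤ t ∧ t * t = b := ⟨√b, Real.sqrt_nonneg b, Real.mul_self_sqrt hb⟩
  have hPQproj := hP.add hQ hPQ
  have hsqrtρ : msqrt (projCombo P (s * s) (t * t)) = projCombo P s t := by
    rw [← projCombo_mul_projCombo hP, msqrt_mul_self (projCombo_nonneg hP hs ht)]
  have hst : √(s * s * (t * t)) = s * t := by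
    rw [show s * s * (t * t) = (s * t) * (s * t) by ring, Real.sqrt_mul_self (mul_nonneg hs ht)]
  rw [sqrtFid, hsqrtρ, projCombo_sandwich_of_mul_eq_zero hP hQ hPQ,
    ← projCombo_mul_projCombo hPQproj,
    msqrt_mul_self (projCombo_nonneg hPQproj (mul_nonneg hs hs) (mul_nonneg hs ht)),
    trace_projCombo, trace_add, hPtr, hQtr, hst,
    ← Complex.ofReal_re (s * s * (Fintype.card n - 2) + 2 * (s * t))]
  congr 1
  push_cast
  ring

end ProjCombo

section RankOne

variable {n : Type*} [Fintype n]

lemma isStarProjection_vecMulVec_star {v : n → ℂ} (hv : star v ⬝ᵥ v = 1) :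
    IsStarProjection (vecMulVec v (star v)) where
  isSelfAdjoint := by rw [IsSelfAdjoint, star_eq_conjTranspose, conjTranspose_vecMulVec, star_star]
  isIdempotentElem := by rw [IsIdempotentElem, vecMulVec_mul_vecMulVec, hv, one_smul]

lemma vecMulVec_star_mul_mul_vecMulVec_star (v : n → ℂ) (M : Matrix n n ℂ) :
    vecMulVec v (star v) * M * vecMulVec v (star v) =
      (star v ⬝ᵥ M *ᵥ v) • vecMulVec v (star v) := by
  rw [Matrix.mul_assoc, mul_vecMulVec, vecMulVec_mul_vecMulVec, vecMulVec_smul]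

end RankOne

lemma inv_ofReal_sqrt_two_mul_self : ((√2 : ℝ) : ℂ)⁻¹ * ((√2 : ℝ) : ℂ)⁻¹ = 2⁻¹ := by
  rw [← mul_inv, ← Complex.ofReal_mul, Real.mul_self_sqrt zero_le_two, Complex.ofReal_ofNat]

/-- The singlet Bell vector `(|01⟩ - |10⟩) / √2`. -/
noncomputable def singlet : Fin 2 × Fin 2 → ℂ := fun p => !![0, 1; -1, 0] p.1 p.2 / (√2 : ℝ)

lemma star_singlet_dotProduct_singlet : star singlet ⬝ᵥ singlet = 1 := by
  norm_num [singlet, dotProduct, Fintype.sum_prod_type, div_eq_mul_inv,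
    inv_ofReal_sqrt_two_mul_self]

lemma star_singlet_dotProduct_kronecker_one_mulVec_singlet (U : Matrix (Fin 2) (Fin 2) ℂ) :
    star singlet ⬝ᵥ (U ⊗ₖ (1 : Matrix (Fin 2) (Fin 2) ℂ)) *ᵥ singlet = U.trace / 2 := by
  simp only [dotProduct, Pi.star_apply, singlet, of_apply, cons_val', cons_val_fin_one,
    div_eq_mul_inv, star_mul', RCLike.star_def, star_inv₀, Complex.conj_ofReal, mulVec,
    kroneckerMap_apply, Fintype.sum_prod_type, Fin.sum_univ_two, Fin.isValue, cons_val_zero,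
    cons_val_one, zero_mul, mul_zero, one_mul, zero_add, neg_mul, mul_neg, add_zero, ne_eq,
    zero_ne_one, one_ne_zero, not_false_eq_true, one_apply_ne, one_apply_eq, mul_one, neg_zero,
    map_zero, map_one, map_neg, neg_neg, mul_left_comm _ (U _ _), inv_ofReal_sqrt_two_mul_self,
    trace_fin_two]
  ring

lemma bellDiag_eq_projCombo_singlet (a b : ℝ) :
    bellDiag a a a b = projCombo (vecMulVec singlet (star singlet)) a b := by
  ext ⟨i₁, i₂⟩ ⟨j₁, j₂⟩
  fin_cases i₁ <;> fin_cases i₂ <;> fin_cases j₁ <;> fin_cases j₂ <;>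
    simp [bellDiag, projCombo, singlet, finProdFinEquiv, vecMulVec_apply, div_eq_mul_inv,
      inv_ofReal_sqrt_two_mul_self] <;>
    ring

lemma sqrtFid_bellDiag_kronecker_conj {U : Matrix (Fin 2) (Fin 2) ℂ} (hU : Uᴴ * U = 1)
    (hUtr : U.trace = 0) {a b : ℝ} (ha : 0 ≤ a) (hb : 0 ≤ b) :
    sqrtFid (bellDiag a a a b)
      ((U ⊗ₖ (1 : Matrix (Fin 2) (Fin 2) ℂ)) * bellDiag a a a b *
        (U ⊗ₖ (1 : Matrix (Fin 2) (Fin 2) ℂ))ᴴ) = 2 * a + 2 * √(a * b) := by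
  set P := vecMulVec singlet (star singlet)
  set K := U ⊗ₖ (1 : Matrix (Fin 2) (Fin 2) ℂ)
  have hK : K ∈ unitary _ :=
    kronecker_mem_unitary (mem_unitaryGroup_iff'.mpr hU) (one_mem _)
  have hP : IsStarProjection P := isStarProjection_vecMulVec_star star_singlet_dotProduct_singlet
  have hPtr : P.trace = 1 := by
    rw [trace_vecMulVec, dotProduct_comm, star_singlet_dotProduct_singlet]
  have hPK : P * (K * P * star K) = 0 := by
    rw [← Matrix.mul_assoc, ← Matrix.mul_assoc, vecMulVec_star_mul_mul_vecMulVec_star,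
      star_singlet_dotProduct_kronecker_one_mulVec_singlet, hUtr, zero_div, zero_smul,
      Matrix.zero_mul]
  rw [bellDiag_eq_projCombo_singlet, ← star_eq_conjTranspose, projCombo_conj_unitary hK,
    sqrtFid_projCombo_of_mul_eq_zero hP (hP.conj_unitary hK) hPK hPtr
      (by rw [trace_mul_cycle, Unitary.star_mul_self_of_mem hK, Matrix.one_mul, hPtr]) ha hb,
    Fintype.card_prod, Fintype.card_fin]
  ring

theorem discord_of_response_werner
    (f : ℝ) (hf0 : 0 ≤ f) (hf1 : f ≤ 1) :
    sInf {r : ℝ | ∃ U : Matrix (Fin 2) (Fin 2) ℂ, Uᴴ * U = 1 ∧ U.trace = 0 ∧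
        r = 1 - sqrtFid (bellDiag ((1 - f) / 3) ((1 - f) / 3) ((1 - f) / 3) f)
          ((U ⊗ₖ (1 : Matrix (Fin 2) (Fin 2) ℂ)) *
            bellDiag ((1 - f) / 3) ((1 - f) / 3) ((1 - f) / 3) f *
            (U ⊗ₖ (1 : Matrix (Fin 2) (Fin 2) ℂ))ᴴ)}
      = 1 - (2 / 3) * (1 - f) - (2 / Real.sqrt 3) * Real.sqrt (f * (1 - f)) := by
  have ha : 0 ≤ (1 - f) / 3 := by linarith
  set σz : Matrix (Fin 2) (Fin 2) ℂ := !![1, 0; 0, -1]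
  have hσz : σzᴴ * σz = 1 ∧ σz.trace = 0 := by
    refine ⟨?_, by simp [σz, trace_fin_two]⟩
    ext i j; fin_cases i <;> fin_cases j <;> simp [σz, mul_apply, Fin.sum_univ_two]
  calc sInf _ = sInf {1 - (2 * ((1 - f) / 3) + 2 * √((1 - f) / 3 * f))} := by
        congr 1
        ext r
        constructor
        · rintro ⟨U, hU, hUtr, rfl⟩
          rw [sqrtFid_bellDiag_kronecker_conj hU hUtr ha hf0, Set.mem_singleton_iff]
        · rintro rfl
          exact ⟨σz, hσz.1, hσz.2, by rw [sqrtFid_bellDiag_kronecker_conj hσz.1 hσz.2 ha hf0]⟩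
    _ = _ := by
        rw [csInf_singleton, show (1 - f) / 3 * f = f * (1 - f) / 3 by ring,
          Real.sqrt_div' _ zero_le_three]
        ring
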